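/- Let κ be a regular cardinal, μ a (κ,κ⁺)-cardinal, and m the μ-coloring. Then the tree T = {m(·,α)↾β : β < α < κ⁺} of restricted functions ordered by extension is a κ⁺-Aronszajn tree: it has height κ⁺, every level has cardinality at most κ, and it has no branch of length κ⁺. -/

import Mathlib

open Set Cardinal Ordinal

noncomputable section

/-- Lower a (small) ordinal of `Ordinal.{1}` to `Ordinal.{0}` (the inverse of `Ordinal.lift`
on its range). -/
noncomputable def olower (o : Ordinal.{1}) : Ordinal.{0} :=
  sInf {a : Ordinal.{0} | Ordinal.lift.{1} a = o}

/-- The order type of a set of ordinals. -/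
noncomputable def otp (A : Set Ordinal.{0}) : Ordinal.{0} :=
  olower (Ordinal.type (Subrel ((· < ·) : Ordinal → Ordinal → Prop) (· ∈ A)))

/-- The canonical order-preserving transfer map from a set of ordinals `X` to a set of
ordinals `Y` of the same order type: an element `a ∈ X` is sent to the unique element of `Y`
occupying the same position. -/
noncomputable def omap (X Y : Set Ordinal) (a : Ordinal) : Ordinal :=
  sInf {b | b ∈ Y ∧ otp (Y ∩ Set.Iio b) = otp (X ∩ Set.Iio a)}

/-- `IsStar X₁ X₂ X` says `X = X₁ * X₂`: `X₁` and `X₂` have the same order type,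
`X = X₁ ∪ X₂`, and `X₁ ∩ X₂ < X₁ \ X₂ < X₂ \ X₁` elementwise. -/
def IsStar (X₁ X₂ X : Set Ordinal) : Prop :=
  otp X₁ = otp X₂ ∧ X = X₁ ∪ X₂ ∧
  (∀ a ∈ X₁ ∩ X₂, ∀ b ∈ X₁ \ X₂, a < b) ∧
  (∀ b ∈ X₁ \ X₂, ∀ c ∈ X₂ \ X₁, b < c)

set_option linter.deprecated false in
/-- A `(κ,κ⁺)`-cardinal (a neat simplified `(κ,1)`-morass presented as a family of sets):
a family `μ ⊆ ℘_κ(κ⁺)` which is well-founded under strict inclusion, locally small,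
homogeneous, directed, locally almost directed, covers `κ⁺` and is neat. -/
structure TwoCardinal (κ : Cardinal.{0}) where
  mu : Set (Set Ordinal)
  mem_sub : ∀ X ∈ mu, X ⊆ Set.Iio (Order.succ κ).ord
  mem_small : ∀ X ∈ mu, (otp X).card < κ
  wf : WellFounded fun X Y : mu => (X : Set Ordinal) ⊂ (Y : Set Ordinal)
  locSmall : ∀ X : mu,
    #{Z : mu // (Z : Set Ordinal) ⊂ (X : Set Ordinal)} < Cardinal.lift.{1} κ
  homog : ∀ X Y : mu, (wf.apply X).rank = (wf.apply Y).rank →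
    otp (X : Set Ordinal) = otp (Y : Set Ordinal) ∧
    {Z | Z ∈ mu ∧ Z ⊂ (Y : Set Ordinal)} =
      (fun Z => omap (X : Set Ordinal) (Y : Set Ordinal) '' Z) ''
        {Z | Z ∈ mu ∧ Z ⊂ (X : Set Ordinal)}
  directed : ∀ X ∈ mu, ∀ Y ∈ mu, ∃ Z ∈ mu, X ⊆ Z ∧ Y ⊆ Z
  locAlmostDirected : ∀ X : mu,
    (∀ Z₁ ∈ mu, ∀ Z₂ ∈ mu, Z₁ ⊂ (X : Set Ordinal) → Z₂ ⊂ (X : Set Ordinal) →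
      ∃ Z ∈ mu, Z ⊂ (X : Set Ordinal) ∧ Z₁ ⊆ Z ∧ Z₂ ⊆ Z) ∨
    (∃ X₁ X₂ : mu, (wf.apply X₁).rank = (wf.apply X₂).rank ∧
      IsStar (X₁ : Set Ordinal) (X₂ : Set Ordinal) (X : Set Ordinal) ∧
      {Z | Z ∈ mu ∧ Z ⊂ (X : Set Ordinal)} =
        {Z | Z ∈ mu ∧ Z ⊂ (X₁ : Set Ordinal)} ∪ {Z | Z ∈ mu ∧ Z ⊂ (X₂ : Set Ordinal)} ∪
          {(X₁ : Set Ordinal), (X₂ : Set Ordinal)})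
  covers : ⋃₀ mu = Set.Iio (Order.succ κ).ord
  neat : ∀ X : mu, (wf.apply X).rank ≠ 0 →
    (X : Set Ordinal) = ⋃₀ {Z | Z ∈ mu ∧ Z ⊂ (X : Set Ordinal)}

namespace TwoCardinal

variable {κ : Cardinal} (M : TwoCardinal κ)

set_option linter.deprecated false in
/-- The rank of an element of `μ` in the well-founded order `(μ, ⊂)`. -/
noncomputable def rank (X : M.mu) : Ordinal := olower ((M.wf.apply X).rank)

/-- The height of the well-founded order `(μ, ⊂)`. -/
noncomputable def ht : Ordinal := sSup (Set.range fun X : M.mu => M.rank X + 1)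

/-- The term `μ_ξ(α)` of the μ-sequence at `α`: equal to `X ∩ α` for any `X ∈ μ` of
rank `ξ` containing `α` (this is independent of the choice of `X`). -/
noncomputable def seq (α ξ : Ordinal) : Set Ordinal :=
  ⋃₀ {S | ∃ X : M.mu, M.rank X = ξ ∧ α ∈ (X : Set Ordinal) ∧
    S = (X : Set Ordinal) ∩ Set.Iio α}

/-- The μ-coloring `m(α,β) = min{rank X : α, β ∈ X ∈ μ}`. -/
noncomputable def mcol (a b : Ordinal) : Ordinal :=
  sInf {ξ | ∃ X : M.mu, M.rank X = ξ ∧ a ∈ (X : Set Ordinal) ∧ b ∈ (X : Set Ordinal)}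

end TwoCardinal

/-!
Two facts about `μ` drive the proof. Coherence: if `rank X ≤ rank Y` and `α ∈ X ∩ Y`, then
`X ∩ α ⊆ Y`; this is proved by induction on a common upper bound, using local almost
directedness, with homogeneity carrying the statement across the two halves of a split
`X₁ * X₂`. Descent: two points lying in `X` and in some set of rank `ν ≤ rank X` lie in a
subset of `X` of rank exactly `ν`.

Consequently `m(·,α)↾β` is determined by the colour `ρ = m(β,α)` and the order type of the
`μ`-sequence `μ_ρ(α) = X ∩ α` (for any `X` of rank `ρ` through `β` and `α`): the transfer
between two such sets fixes everything below `β`. Both invariants are below `κ`, so every level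
has at most `κ` elements. A branch of length `κ⁺` takes values below `κ`, so some colour `ρ`
is taken `κ⁺` times, hence `κ` times below some `β < κ⁺`; but below `β` the branch agrees with
some `m(·,α)`, and `{ξ < α | m(ξ,α) = ρ} ⊆ μ_ρ(α)` has fewer than `κ` elements.
-/

theorem olower_lift (o : Ordinal.{0}) : olower (Ordinal.lift.{1} o) = o := by
  simp [olower, Ordinal.lift_inj]

theorem lift_otp {A : Set Ordinal} (hA : BddAbove A) : Ordinal.lift.{1} (otp A) = typeLT A := by
  obtain ⟨c, hc⟩ := hA
  have hle : typeLT A ≤ Ordinal.lift.{1} (Order.succ c) := by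
    rw [← type_lt_Iio]
    exact type_mono fun x hx => Order.lt_succ_iff.2 (hc hx)
  obtain ⟨o, ho⟩ := Ordinal.mem_range_lift_of_le hle
  change Ordinal.lift.{1} (olower (typeLT A)) = typeLT A
  rw [← ho, olower_lift]

theorem lift_card_otp {A : Set Ordinal} (hA : BddAbove A) :
    Cardinal.lift.{1} (otp A).card = #A := by
  rw [Ordinal.lift_card, lift_otp hA, card_type]

theorem otp_lt_ord_iff {A : Set Ordinal} (hA : BddAbove A) {κ : Cardinal} :
    otp A < κ.ord ↔ #A < Cardinal.lift.{1} κ := by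
  rw [Cardinal.lt_ord, ← lift_card_otp hA, Cardinal.lift_lt]

theorem typeLT_inter_Iio {B : Set Ordinal} {a : Ordinal} (ha : a ∈ B) :
    typeLT ↥(B ∩ Iio a) = typein (α := B) (· < ·) ⟨a, ha⟩ := by
  rw [← type_Iio_lt]
  exact OrderIso.ordinalType_congr
    ⟨⟨fun x => ⟨⟨x, x.2.1⟩, x.2.2⟩, fun y => ⟨y, y.1.2, y.2⟩, fun _ => rfl, fun _ => rfl⟩, Iff.rfl⟩

theorem typeLT_inter_Iio_lt {B : Set Ordinal} {a : Ordinal} (ha : a ∈ B) :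
    typeLT ↥(B ∩ Iio a) < typeLT B := by
  rw [typeLT_inter_Iio ha]
  exact typein_lt_type _ _

theorem exists_typeLT_inter_Iio_eq {B : Set Ordinal} {o : Ordinal.{1}} (ho : o < typeLT B) :
    ∃ b ∈ B, typeLT ↥(B ∩ Iio b) = o := by
  obtain ⟨⟨b, hb⟩, rfl⟩ := typein_surj (α := B) (· < ·) ho
  exact ⟨b, hb, typeLT_inter_Iio hb⟩

theorem lift_otp_inter_Iio (B : Set Ordinal) (b : Ordinal) :
    Ordinal.lift.{1} (otp (B ∩ Iio b)) = typeLT ↥(B ∩ Iio b) :=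
  lift_otp (bddAbove_Iio.mono inter_subset_right)

theorem injOn_otp_inter_Iio (B : Set Ordinal) : InjOn (fun b => otp (B ∩ Iio b)) B := by
  intro a ha b hb h
  have h' := congrArg Ordinal.lift.{1} h
  rw [lift_otp_inter_Iio, lift_otp_inter_Iio, typeLT_inter_Iio ha, typeLT_inter_Iio hb,
    typein_inj] at h'
  exact congrArg Subtype.val h'

section omap

variable {X Y : Set Ordinal} {a b : Ordinal}

theorem omap_eq_of_otp_eq (hb : b ∈ Y) (h : otp (Y ∩ Iio b) = otp (X ∩ Iio a)) :
    omap X Y a = b := by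
  have : {b' | b' ∈ Y ∧ otp (Y ∩ Iio b') = otp (X ∩ Iio a)} = {b} :=
    eq_singleton_iff_unique_mem.2
      ⟨⟨hb, h⟩, fun b' hb' => injOn_otp_inter_Iio Y hb'.1 hb (hb'.2.trans h.symm)⟩
  rw [omap, this, csInf_singleton]

theorem omap_eq_self (ha : a ∈ Y) (h : X ∩ Iio a = Y ∩ Iio a) : omap X Y a = a :=
  omap_eq_of_otp_eq ha (by rw [h])

variable (hX : BddAbove X) (hY : BddAbove Y) (hXY : otp X = otp Y)
include hX hY hXY

theorem omap_mem_and_otp_inter_Iio (ha : a ∈ X) :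
    omap X Y a ∈ Y ∧ otp (Y ∩ Iio (omap X Y a)) = otp (X ∩ Iio a) := by
  have hlt : typeLT ↥(X ∩ Iio a) < typeLT Y := by
    rw [← lift_otp hY, ← hXY, lift_otp hX]
    exact typeLT_inter_Iio_lt ha
  obtain ⟨b, hb, hpos⟩ := exists_typeLT_inter_Iio_eq hlt
  have hpos' : otp (Y ∩ Iio b) = otp (X ∩ Iio a) := by
    rw [← Ordinal.lift_inj.{1}, lift_otp_inter_Iio, lift_otp_inter_Iio, hpos]
  rw [omap_eq_of_otp_eq hb hpos']
  exact ⟨hb, hpos'⟩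

theorem injOn_omap : InjOn (omap X Y) X := by
  intro a ha a' ha' h
  have h₁ := (omap_mem_and_otp_inter_Iio hX hY hXY ha).2
  have h₂ := (omap_mem_and_otp_inter_Iio hX hY hXY ha').2
  rw [h] at h₁
  exact injOn_otp_inter_Iio X ha ha' (h₁.symm.trans h₂)

end omap

theorem IsStar.inter_Iio_eq {A B C : Set Ordinal} (h : IsStar A B C) (hAB : ¬A ⊆ B)
    {a : Ordinal} (ha : a ∈ A ∩ B) : A ∩ Iio a = B ∩ Iio a := by
  obtain ⟨-, -, h₁, h₂⟩ := h
  obtain ⟨w, hw⟩ := not_subset.1 hAB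
  ext x
  refine ⟨fun ⟨hxA, hxa⟩ => ⟨?_, hxa⟩, fun ⟨hxB, hxa⟩ => ⟨?_, hxa⟩⟩
  · by_contra hxB
    exact (h₁ a ha x ⟨hxA, hxB⟩).not_gt hxa
  · by_contra hxA
    exact ((h₁ a ha w hw).trans (h₂ w hw x ⟨hxB, hxA⟩)).not_gt hxa

theorem IsWellFounded.rank_orderIso_Iio_apply_le {α : Type*} [Preorder α] [WellFoundedLT α]
    {a b : α} (f : Iio a ≃o Iio b) (z : Iio a) :
    IsWellFounded.rank (· < ·) (f z : α) ≤ IsWellFounded.rank (· < ·) (z : α) := by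
  induction z using WellFoundedLT.induction with
  | _ z IH =>
  rw [IsWellFounded.rank_eq (· < ·) (f z : α)]
  refine Ordinal.iSup_le fun ⟨w, hw⟩ => Order.succ_le_of_lt ?_
  set w' : Iio b := ⟨w, hw.trans (f z).2⟩
  have hlt : f.symm w' < z := by rw [← f.lt_iff_lt, f.apply_symm_apply]; exact hw
  calc IsWellFounded.rank (· < ·) w = IsWellFounded.rank (· < ·) (f (f.symm w') : α) := by
        rw [f.apply_symm_apply]
    _ ≤ IsWellFounded.rank (· < ·) (f.symm w' : α) := IH _ hlt
    _ < IsWellFounded.rank (· < ·) (z : α) := IsWellFounded.rank_lt_of_rel hlt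

theorem IsWellFounded.rank_orderIso_Iio_apply {α : Type*} [Preorder α] [WellFoundedLT α]
    {a b : α} (f : Iio a ≃o Iio b) (z : Iio a) :
    IsWellFounded.rank (· < ·) (f z : α) = IsWellFounded.rank (· < ·) (z : α) := by
  refine (rank_orderIso_Iio_apply_le f z).antisymm ?_
  simpa using rank_orderIso_Iio_apply_le f.symm (f z)

theorem Cardinal.mk_image_le_mk_image_of_factors {α β γ : Type u} {s : Set α} {g : α → β}
    (k : α → γ) (h : ∀ a ∈ s, ∀ b ∈ s, k a = k b → g a = g b) : #(g '' s) ≤ #(k '' s) := by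
  refine mk_le_of_injective
    (f := fun t : g '' s => (⟨k t.2.choose, t.2.choose, t.2.choose_spec.1, rfl⟩ : k '' s)) ?_
  rintro ⟨_, ht⟩ ⟨_, ht'⟩ he
  have := h _ ht.choose_spec.1 _ ht'.choose_spec.1 (congrArg Subtype.val he)
  exact Subtype.ext (ht.choose_spec.2.symm.trans (this.trans ht'.choose_spec.2))

theorem exists_lift_le_card_inter_Iio {κ : Cardinal.{0}} (hκ : ℵ₀ ≤ κ) {A : Set Ordinal.{0}}
    (hA : A ⊆ Iio (Order.succ κ).ord) (hcard : Cardinal.lift.{1} κ ≤ #A) :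
    ∃ β < (Order.succ κ).ord, Cardinal.lift.{1} κ ≤ #↥(A ∩ Iio β) := by
  obtain ⟨B, hBA, hB⟩ := Cardinal.le_mk_iff_exists_subset.1 hcard
  have hsup : sSup B < (Order.succ κ).ord := by
    refine Ordinal.sSup_lt_of_lt_cof ?_ fun i hi => hA (hBA hi)
    rw [hB, ← Ordinal.lift_cof, (Cardinal.isRegular_succ hκ).cof_ord, Cardinal.lift_lt]
    exact Order.lt_succ κ
  refine ⟨Order.succ (sSup B), (Cardinal.isSuccLimit_ord (hκ.trans (Order.le_succ κ))).succ_lt hsup,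
    hB ▸ mk_le_mk_of_subset fun x hx => ⟨hBA hx, Order.lt_succ_iff.2 (le_csSup ?_ hx)⟩⟩
  exact bddAbove_Iio.mono fun i hi => hA (hBA hi)

theorem exists_lift_lt_card_fiber {κ : Cardinal.{0}} (hκ : ℵ₀ ≤ κ) (f : Ordinal → Ordinal)
    (hf : ∀ ξ < (Order.succ κ).ord, f ξ < κ.ord) :
    ∃ ρ, Cardinal.lift.{1} κ < #{ξ | ξ < (Order.succ κ).ord ∧ f ξ = ρ} := by
  have hcard : ∀ c : Cardinal.{0}, #(Iio c.ord) = Cardinal.lift.{1} c := by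
    simp [Cardinal.mk_Iio_ordinal]
  set g := fun ξ : Iio (Order.succ κ).ord => (⟨f ξ, hf ξ ξ.2⟩ : Iio κ.ord)
  obtain ⟨ρ, hρ⟩ := infinite_pigeonhole_card_lt g
    (by rw [hcard, hcard, Cardinal.lift_lt]; exact Order.lt_succ κ)
    (by rw [hcard, ← Cardinal.lift_aleph0.{1, 0}, Cardinal.lift_le]
        exact hκ.trans (Order.le_succ κ))
  refine ⟨ρ, (hcard κ ▸ hρ).trans_le (mk_le_of_injective (f := fun ξ : g ⁻¹' {ρ} =>
    (⟨ξ.1.1, ξ.1.2, congrArg Subtype.val ξ.2⟩ : {ξ | ξ < (Order.succ κ).ord ∧ f ξ = ρ})) ?_)⟩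
  exact fun ξ ζ h => Subtype.ext (Subtype.ext (by simpa using congrArg Subtype.val h))

namespace TwoCardinal

variable {κ : Cardinal} (M : TwoCardinal κ)

instance : WellFoundedLT M.mu := ⟨M.wf⟩

-- `rank` lowers this to `Ordinal.{0}`, which is faithful only once ranks are known to be
-- below `κ` (`lift_rank`).
abbrev wfRank (X : M.mu) : Ordinal.{1} := IsWellFounded.rank (· < ·) X

theorem wfRank_eq (X : M.mu) : M.wfRank X = ⨆ Z : {Z // Z < X}, Order.succ (M.wfRank Z) :=
  IsWellFounded.rank_eq _ _

theorem wfRank_lt_wfRank {X Y : M.mu} (h : X < Y) : M.wfRank X < M.wfRank Y :=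
  IsWellFounded.rank_lt_of_rel h

theorem wfRank_mono : Monotone M.wfRank :=
  WellFoundedLT.rank_strictMono.monotone

theorem exists_lt_le_wfRank {X : M.mu} {ν : Ordinal} (h : ν < M.wfRank X) :
    ∃ Z < X, ν ≤ M.wfRank Z := by
  rw [wfRank_eq, Ordinal.lt_iSup_iff] at h
  obtain ⟨⟨Z, hZ⟩, h⟩ := h
  exact ⟨Z, hZ, Order.lt_succ_iff.1 h⟩

theorem exists_lt_mem {X : M.mu} (hX : M.wfRank X ≠ 0) {a : Ordinal} (ha : a ∈ X.1) :
    ∃ Z < X, a ∈ Z.1 := by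
  rw [M.neat X hX] at ha
  obtain ⟨Z, ⟨hZ, hZX⟩, haZ⟩ := ha
  exact ⟨⟨Z, hZ⟩, hZX, haZ⟩

theorem exists_le_le (X Y : M.mu) : ∃ Z, X ≤ Z ∧ Y ≤ Z := by
  obtain ⟨Z, hZ, hXZ, hYZ⟩ := M.directed X.1 X.2 Y.1 Y.2
  exact ⟨⟨Z, hZ⟩, hXZ, hYZ⟩

theorem lt_of_mem (X : M.mu) {a : Ordinal} (ha : a ∈ X.1) : a < (Order.succ κ).ord :=
  M.mem_sub X.1 X.2 ha

theorem bddAbove (X : M.mu) : BddAbove X.1 :=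
  bddAbove_Iio.mono (M.mem_sub X.1 X.2)

theorem exists_mem_mem {a b : Ordinal} (ha : a < (Order.succ κ).ord)
    (hb : b < (Order.succ κ).ord) : ∃ X : M.mu, a ∈ X.1 ∧ b ∈ X.1 := by
  obtain ⟨A, hA, haA⟩ : a ∈ ⋃₀ M.mu := M.covers ▸ ha
  obtain ⟨B, hB, hbB⟩ : b ∈ ⋃₀ M.mu := M.covers ▸ hb
  obtain ⟨X, hAX, hBX⟩ := M.exists_le_le ⟨A, hA⟩ ⟨B, hB⟩
  exact ⟨X, hAX haA, hBX hbB⟩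

theorem card_lt (X : M.mu) : #X.1 < Cardinal.lift.{1} κ := by
  rw [← lift_card_otp (M.bddAbove X)]
  exact Cardinal.lift_lt.2 (M.mem_small X.1 X.2)

structure IsSplit (X X₁ X₂ : M.mu) : Prop where
  wfRank_eq : M.wfRank X₁ = M.wfRank X₂
  isStar : IsStar X₁.1 X₂.1 X.1
  left_lt : X₁ < X
  right_lt : X₂ < X
  le_or_le : ∀ Z < X, Z ≤ X₁ ∨ Z ≤ X₂

theorem directed_or_isSplit (X : M.mu) :
    (∀ Z₁ < X, ∀ Z₂ < X, ∃ Z < X, Z₁ ≤ Z ∧ Z₂ ≤ Z) ∨ ∃ X₁ X₂, M.IsSplit X X₁ X₂ := by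
  rcases M.locAlmostDirected X with hdir | ⟨X₁, X₂, hr, hstar, hpred⟩
  · left
    intro Z₁ h₁ Z₂ h₂
    obtain ⟨Z, hZ, hZX, h₁Z, h₂Z⟩ := hdir Z₁.1 Z₁.2 Z₂.1 Z₂.2 h₁ h₂
    exact ⟨⟨Z, hZ⟩, hZX, h₁Z, h₂Z⟩
  · right
    have hlt : ∀ Z : M.mu, Z < X ↔ Z.1 ∈ {Z | Z ∈ M.mu ∧ Z ⊂ X.1} :=
      fun Z => ⟨fun h => ⟨Z.2, h⟩, fun h => h.2⟩
    refine ⟨X₁, X₂, hr, hstar, (hlt X₁).2 ?_, (hlt X₂).2 ?_, fun Z hZ => ?_⟩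
    · rw [hpred]; exact Or.inr (Or.inl rfl)
    · rw [hpred]; exact Or.inr (Or.inr rfl)
    · rw [hlt, hpred] at hZ
      rcases hZ with (⟨-, h⟩ | ⟨-, h⟩) | h | h
      · exact Or.inl h.le
      · exact Or.inr h.le
      · exact Or.inl (le_of_eq (Subtype.ext h))
      · exact Or.inr (le_of_eq (Subtype.ext h))

namespace IsSplit

variable {M} {X X₁ X₂ : M.mu} (h : M.IsSplit X X₁ X₂)
include h

theorem wfRank_eq_succ : M.wfRank X = Order.succ (M.wfRank X₁) := by
  refine le_antisymm ?_ (Order.succ_le_of_lt (M.wfRank_lt_wfRank h.left_lt))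
  rw [M.wfRank_eq X]
  refine Ordinal.iSup_le fun ⟨Z, hZ⟩ => Order.succ_le_succ ?_
  rcases h.le_or_le Z hZ with hZ | hZ
  · exact M.wfRank_mono hZ
  · exact (M.wfRank_mono hZ).trans h.wfRank_eq.ge

theorem mem_or_mem {a : Ordinal} (ha : a ∈ X.1) : a ∈ X₁.1 ∨ a ∈ X₂.1 := by
  rwa [h.isStar.2.1] at ha

theorem not_left_le : ¬X₁ ≤ X₂ := by
  intro hle
  rcases hle.eq_or_lt with heq | hlt
  · have : X.1 = X₁.1 := by rw [h.isStar.2.1, heq, union_self]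
    exact h.left_lt.ne (Subtype.ext this.symm)
  · exact (M.wfRank_lt_wfRank hlt).ne h.wfRank_eq

theorem inter_Iio_eq {a : Ordinal} (ha : a ∈ X₁.1 ∩ X₂.1) : X₁.1 ∩ Iio a = X₂.1 ∩ Iio a :=
  h.isStar.inter_Iio_eq h.not_left_le ha

end IsSplit

section Regular

variable {M} (hκ : κ.IsRegular)
include hκ

theorem wfRank_lt_ord (X : M.mu) : M.wfRank X < (Cardinal.lift.{1} κ).ord := by
  have hcof : (Cardinal.lift.{1} κ).ord.cof = Cardinal.lift.{1} κ := by
    rw [← Cardinal.lift_ord, ← Ordinal.lift_cof, hκ.cof_ord]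
  have hlim : Order.IsSuccLimit (Cardinal.lift.{1} κ).ord :=
    Cardinal.isSuccLimit_ord (by simpa using hκ.aleph0_le)
  induction X using WellFoundedLT.induction with
  | _ X IH =>
  rw [wfRank_eq]
  exact Ordinal.iSup_lt_of_lt_cof (by rw [hcof]; exact M.locSmall X)
    fun Z => hlim.succ_lt (IH Z.1 Z.2)

theorem lift_rank (X : M.mu) : Ordinal.lift.{1} (M.rank X) = M.wfRank X := by
  obtain ⟨o, ho⟩ := Ordinal.mem_range_lift_of_le
    ((wfRank_lt_ord hκ X).le.trans_eq (Cardinal.lift_ord κ).symm)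
  change Ordinal.lift.{1} (olower (M.wfRank X)) = M.wfRank X
  rw [← ho, olower_lift]

theorem rank_lt_ord (X : M.mu) : M.rank X < κ.ord := by
  rw [← Ordinal.lift_lt.{1}, lift_rank hκ, Cardinal.lift_ord]
  exact wfRank_lt_ord hκ X

theorem rank_eq_rank_iff {X Y : M.mu} : M.rank X = M.rank Y ↔ M.wfRank X = M.wfRank Y := by
  rw [← Ordinal.lift_inj.{1}, lift_rank hκ, lift_rank hκ]

end Regular

section Transfer

variable {X₁ X₂ : M.mu} (hr : M.wfRank X₁ = M.wfRank X₂)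
include hr

theorem injOn_omap_of_wfRank_eq : InjOn (omap X₁.1 X₂.1) X₁.1 :=
  injOn_omap (M.bddAbove X₁) (M.bddAbove X₂) (M.homog X₁ X₂ hr).1

theorem image_omap_mem {Z : M.mu} (hZ : Z < X₁) :
    omap X₁.1 X₂.1 '' Z.1 ∈ {W | W ∈ M.mu ∧ W ⊂ X₂.1} := by
  rw [(M.homog X₁ X₂ hr).2]
  exact ⟨Z.1, ⟨Z.2, hZ⟩, rfl⟩

def transfer : Iio X₁ ≃o Iio X₂ :=
  OrderIso.ofSurjective
    (OrderEmbedding.ofMapLEIff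
      (fun Z => ⟨⟨_, (M.image_omap_mem hr Z.2).1⟩, (M.image_omap_mem hr Z.2).2⟩)
      fun Z Z' => (M.injOn_omap_of_wfRank_eq hr).image_subset_image_iff Z.2.le Z'.2.le)
    (by
      rintro ⟨W, hW⟩
      have : W.1 ∈ {W | W ∈ M.mu ∧ W ⊂ X₂.1} := ⟨W.2, hW⟩
      rw [(M.homog X₁ X₂ hr).2] at this
      obtain ⟨Z, ⟨hZ, hZX⟩, hZW⟩ := this
      exact ⟨⟨⟨Z, hZ⟩, hZX⟩, Subtype.ext (Subtype.ext hZW)⟩)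

theorem coe_transfer (Z : Iio X₁) :
    ((M.transfer hr Z : M.mu) : Set Ordinal) = omap X₁.1 X₂.1 '' (Z : M.mu).1 :=
  rfl

theorem wfRank_transfer (Z : Iio X₁) : M.wfRank (M.transfer hr Z) = M.wfRank Z :=
  IsWellFounded.rank_orderIso_Iio_apply _ _

end Transfer

section Coherence

def CoherentBelow (W : M.mu) : Prop :=
  ∀ X ≤ W, ∀ Y ≤ W, M.wfRank X ≤ M.wfRank Y → ∀ α ∈ X.1, α ∈ Y.1 → X.1 ∩ Iio α ⊆ Y.1

variable {M}

theorem CoherentBelow.of_lt {W : M.mu}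
    (h : ∀ X < W, ∀ Y < W, M.wfRank X ≤ M.wfRank Y → ∀ α ∈ X.1, α ∈ Y.1 → X.1 ∩ Iio α ⊆ Y.1) :
    M.CoherentBelow W := by
  intro X hX Y hY hXY α hαX hαY
  rcases hY.eq_or_lt with rfl | hY
  · exact fun x hx => hX hx.1
  have hX : X < W := hX.lt_of_ne (by rintro rfl; exact (M.wfRank_lt_wfRank hY).not_ge hXY)
  exact h X hX Y hY hXY α hαX hαY

theorem inter_Iio_subset_of_transfer {P Q : M.mu} (hr : M.wfRank P = M.wfRank Q)
    (hPQ : ∀ a ∈ P.1 ∩ Q.1, P.1 ∩ Iio a = Q.1 ∩ Iio a) (hP : M.CoherentBelow P)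
    {X Y : M.mu} (hXP : X ≤ P) (hYQ : Y ≤ Q) (hXY : M.wfRank X ≤ M.wfRank Y)
    {α : Ordinal} (hαX : α ∈ X.1) (hαY : α ∈ Y.1) : X.1 ∩ Iio α ⊆ Y.1 := by
  have hα : α ∈ P.1 ∩ Q.1 := ⟨hXP hαX, hYQ hαY⟩
  rcases hYQ.eq_or_lt with rfl | hYQ
  · exact fun x hx => ((hPQ α hα).subset ⟨hXP hx.1, hx.2⟩).1
  set Y₀ := (M.transfer hr).symm ⟨Y, hYQ⟩
  have hY : Y.1 = omap P.1 Q.1 '' (Y₀ : M.mu).1 := by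
    rw [← M.coe_transfer hr, OrderIso.apply_symm_apply]
  have hY₀P : (Y₀ : M.mu) ≤ P := Y₀.2.le
  have hrank : M.wfRank Y₀ = M.wfRank Y := by
    rw [← M.wfRank_transfer hr, OrderIso.apply_symm_apply]
  have hfix : ∀ x ∈ P.1, x ≤ α → omap P.1 Q.1 x = x := by
    intro x hxP hxα
    have hx : x ∈ P.1 ∩ Q.1 := hxα.eq_or_lt.elim (· ▸ hα)
      fun hxα => ⟨hxP, ((hPQ α hα).subset ⟨hxP, hxα⟩).1⟩
    exact omap_eq_self hx.2 (hPQ x hx)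
  have hinj := M.injOn_omap_of_wfRank_eq hr
  have hαY₀ : α ∈ (Y₀ : M.mu).1 := by
    rw [← hinj.mem_image_iff hY₀P hα.1, hfix α hα.1 le_rfl, ← hY]
    exact hαY
  intro x hx
  rw [hY, ← hfix x (hXP hx.1) hx.2.le]
  exact mem_image_of_mem _ (hP X hXP Y₀ hY₀P (hXY.trans hrank.ge) α hαX hαY₀ hx)

theorem IsSplit.coherentBelow {X X₁ X₂ : M.mu} (h : M.IsSplit X X₁ X₂)
    (h₁ : M.CoherentBelow X₁) (h₂ : M.CoherentBelow X₂) : M.CoherentBelow X := by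
  refine CoherentBelow.of_lt fun A hA B hB hAB α hαA hαB => ?_
  have h₁₂ : ∀ a ∈ X₁.1 ∩ X₂.1, X₁.1 ∩ Iio a = X₂.1 ∩ Iio a := fun a ha => h.inter_Iio_eq ha
  have h₂₁ : ∀ a ∈ X₂.1 ∩ X₁.1, X₂.1 ∩ Iio a = X₁.1 ∩ Iio a :=
    fun a ha => (h.inter_Iio_eq ⟨ha.2, ha.1⟩).symm
  rcases h.le_or_le A hA with hA | hA <;> rcases h.le_or_le B hB with hB | hB
  · exact h₁ A hA B hB hAB α hαA hαB
  · exact inter_Iio_subset_of_transfer h.wfRank_eq h₁₂ h₁ hA hB hAB hαA hαB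
  · exact inter_Iio_subset_of_transfer h.wfRank_eq.symm h₂₁ h₂ hA hB hAB hαA hαB
  · exact h₂ A hA B hB hAB α hαA hαB

theorem coherentBelow (W : M.mu) : M.CoherentBelow W := by
  induction W using WellFoundedLT.induction with
  | _ W IH =>
  rcases M.directed_or_isSplit W with hdir | ⟨X₁, X₂, h⟩
  · refine CoherentBelow.of_lt fun A hA B hB hAB α hαA hαB => ?_
    obtain ⟨Z, hZW, hAZ, hBZ⟩ := hdir A hA B hB
    exact IH Z hZW A hAZ B hBZ hAB α hαA hαB
  · exact h.coherentBelow (IH X₁ h.left_lt) (IH X₂ h.right_lt)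

theorem inter_Iio_subset_of_wfRank_le {X Y : M.mu} (hXY : M.wfRank X ≤ M.wfRank Y)
    {α : Ordinal} (hαX : α ∈ X.1) (hαY : α ∈ Y.1) : X.1 ∩ Iio α ⊆ Y.1 := by
  obtain ⟨W, hXW, hYW⟩ := M.exists_le_le X Y
  exact coherentBelow W X hXW Y hYW hXY α hαX hαY

theorem inter_Iio_eq_of_wfRank_eq {X Y : M.mu} (hXY : M.wfRank X = M.wfRank Y)
    {α : Ordinal} (hαX : α ∈ X.1) (hαY : α ∈ Y.1) : X.1 ∩ Iio α = Y.1 ∩ Iio α :=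
  subset_antisymm (fun _ hx => ⟨inter_Iio_subset_of_wfRank_le hXY.le hαX hαY hx, hx.2⟩)
    (fun _ hx => ⟨inter_Iio_subset_of_wfRank_le hXY.ge hαY hαX hx, hx.2⟩)

theorem IsSplit.both_mem_left_or_both_mem_right {X X₁ X₂ Z : M.mu} (h : M.IsSplit X X₁ X₂)
    (hZ : M.wfRank Z ≤ M.wfRank X₁) {ξ α : Ordinal} (hξ : ξ ∈ X.1) (hα : α ∈ X.1)
    (hξZ : ξ ∈ Z.1) (hαZ : α ∈ Z.1) : (ξ ∈ X₁.1 ∧ α ∈ X₁.1) ∨ (ξ ∈ X₂.1 ∧ α ∈ X₂.1) := by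
  -- a point of `X₁ \ X₂` lies below every point of `X₂ \ X₁`, so coherence of `Z` with `X₂`
  -- pulls it into `X₂`
  have cross : ∀ a ∈ Z.1, ∀ b ∈ Z.1, a ∈ X₁.1 → b ∈ X₂.1 → a ∈ X₂.1 ∨ b ∈ X₁.1 := by
    intro a ha b hb ha₁ hb₂
    by_contra! hc
    exact hc.1 (inter_Iio_subset_of_wfRank_le (hZ.trans h.wfRank_eq.le) hb hb₂
      ⟨ha, h.isStar.2.2.2 a ⟨ha₁, hc.1⟩ b ⟨hb₂, hc.2⟩⟩)
  have := cross ξ hξZ α hαZ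
  have := cross α hαZ ξ hξZ
  rcases h.mem_or_mem hξ with _ | _ <;> rcases h.mem_or_mem hα with _ | _ <;> tauto

theorem exists_lt_mem_mem_le_wfRank {X Z : M.mu} {ν : Ordinal} {ξ α : Ordinal}
    (hξ : ξ ∈ X.1) (hα : α ∈ X.1) (hξZ : ξ ∈ Z.1) (hαZ : α ∈ Z.1)
    (hZν : M.wfRank Z ≤ ν) (hνX : ν < M.wfRank X) :
    ∃ U < X, ξ ∈ U.1 ∧ α ∈ U.1 ∧ ν ≤ M.wfRank U := by
  rcases M.directed_or_isSplit X with hdir | ⟨X₁, X₂, h⟩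
  · have hX : M.wfRank X ≠ 0 := (zero_le.trans_lt hνX).ne'
    obtain ⟨S₁, hS₁, hξS₁⟩ := M.exists_lt_mem hX hξ
    obtain ⟨S₂, hS₂, hαS₂⟩ := M.exists_lt_mem hX hα
    obtain ⟨S₃, hS₃, hνS₃⟩ := M.exists_lt_le_wfRank hνX
    obtain ⟨U₁, hU₁, hS₁U₁, hS₂U₁⟩ := hdir S₁ hS₁ S₂ hS₂
    obtain ⟨U, hU, hU₁U, hS₃U⟩ := hdir U₁ hU₁ S₃ hS₃
    exact ⟨U, hU, hU₁U (hS₁U₁ hξS₁), hU₁U (hS₂U₁ hαS₂), hνS₃.trans (M.wfRank_mono hS₃U)⟩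
  · have hν : ν ≤ M.wfRank X₁ := Order.lt_succ_iff.1 (h.wfRank_eq_succ ▸ hνX)
    rcases h.both_mem_left_or_both_mem_right (hZν.trans hν) hξ hα hξZ hαZ with ⟨h₁, h₂⟩ | ⟨h₁, h₂⟩
    · exact ⟨X₁, h.left_lt, h₁, h₂, hν⟩
    · exact ⟨X₂, h.right_lt, h₁, h₂, hν.trans h.wfRank_eq.le⟩

theorem exists_le_mem_mem_wfRank_eq {X Z : M.mu} {ν : Ordinal} {ξ α : Ordinal}
    (hξ : ξ ∈ X.1) (hα : α ∈ X.1) (hξZ : ξ ∈ Z.1) (hαZ : α ∈ Z.1)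
    (hZν : M.wfRank Z ≤ ν) (hνX : ν ≤ M.wfRank X) :
    ∃ V ≤ X, ξ ∈ V.1 ∧ α ∈ V.1 ∧ M.wfRank V = ν := by
  induction X using WellFoundedLT.induction with
  | _ X IH =>
  rcases hνX.eq_or_lt with rfl | hνX
  · exact ⟨X, le_rfl, hξ, hα, rfl⟩
  obtain ⟨U, hUX, hξU, hαU, hνU⟩ := exists_lt_mem_mem_le_wfRank hξ hα hξZ hαZ hZν hνX
  obtain ⟨V, hVU, hV⟩ := IH U hUX hξU hαU hνU
  exact ⟨V, hVU.trans hUX.le, hV⟩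

end Coherence

theorem exists_rank_eq_mcol {a b : Ordinal} (ha : a < (Order.succ κ).ord)
    (hb : b < (Order.succ κ).ord) : ∃ X : M.mu, M.rank X = M.mcol a b ∧ a ∈ X.1 ∧ b ∈ X.1 := by
  obtain ⟨X, haX, hbX⟩ := M.exists_mem_mem ha hb
  exact csInf_mem (s := {ξ | ∃ X : M.mu, M.rank X = ξ ∧ a ∈ X.1 ∧ b ∈ X.1}) ⟨_, X, rfl, haX, hbX⟩

theorem mcol_le_rank {X : M.mu} {a b : Ordinal} (ha : a ∈ X.1) (hb : b ∈ X.1) :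
    M.mcol a b ≤ M.rank X :=
  csInf_le' ⟨X, rfl, ha, hb⟩

theorem mcol_lt_ord (hκ : κ.IsRegular) {a b : Ordinal} (ha : a < (Order.succ κ).ord)
    (hb : b < (Order.succ κ).ord) : M.mcol a b < κ.ord := by
  obtain ⟨X, hX, -, -⟩ := M.exists_rank_eq_mcol ha hb
  exact hX ▸ rank_lt_ord hκ X

theorem mem_seq {X : M.mu} {ξ α : Ordinal} (hξ : ξ ∈ X.1) (hα : α ∈ X.1) (hξα : ξ < α) :
    ξ ∈ M.seq α (M.rank X) :=
  ⟨_, ⟨X, rfl, hα, rfl⟩, hξ, hξα⟩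

theorem seq_subset_Iio (α ν : Ordinal) : M.seq α ν ⊆ Iio α :=
  sUnion_subset fun _ ⟨_, _, _, hS⟩ => hS ▸ inter_subset_right

theorem seq_eq_inter_Iio (hκ : κ.IsRegular) {X : M.mu} {α : Ordinal} (hα : α ∈ X.1) :
    M.seq α (M.rank X) = X.1 ∩ Iio α := by
  refine subset_antisymm (sUnion_subset ?_) fun ξ hξ => M.mem_seq hξ.1 hα hξ.2
  rintro S ⟨Y, hY, hαY, rfl⟩
  exact (inter_Iio_eq_of_wfRank_eq ((rank_eq_rank_iff hκ).1 hY) hαY hα).subset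

theorem card_seq_lt (hκ : κ.IsRegular) (α ν : Ordinal) :
    #(M.seq α ν) < Cardinal.lift.{1} κ := by
  by_cases h : ∃ X : M.mu, M.rank X = ν ∧ α ∈ X.1
  · obtain ⟨X, rfl, hα⟩ := h
    rw [M.seq_eq_inter_Iio hκ hα]
    exact (mk_le_mk_of_subset inter_subset_left).trans_lt (M.card_lt X)
  · have : M.seq α ν = ∅ := sUnion_eq_empty.2 fun _ ⟨X, hX, hα, _⟩ => (h ⟨X, hX, hα⟩).elim
    rw [this, mk_eq_zero]
    simpa using hκ.pos

theorem setOf_mcol_eq_subset_seq {α : Ordinal} (hα : α < (Order.succ κ).ord) (ρ : Ordinal) :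
    {ξ | ξ < α ∧ M.mcol ξ α = ρ} ⊆ M.seq α ρ := by
  rintro ξ ⟨hξα, rfl⟩
  obtain ⟨X, hX, hξX, hαX⟩ := M.exists_rank_eq_mcol (hξα.trans hα) hα
  exact hX ▸ M.mem_seq hξX hαX hξα

theorem mcol_le_mcol_of_otp_eq (hκ : κ.IsRegular) {X X' : M.mu}
    (hr : M.wfRank X = M.wfRank X') {ξ β α α' : Ordinal} (hβX : β ∈ X.1) (hβX' : β ∈ X'.1)
    (hαX : α ∈ X.1) (hα'X' : α' ∈ X'.1) (hβα : β < α) (hβα' : β < α')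
    (hpos : otp (X.1 ∩ Iio α) = otp (X'.1 ∩ Iio α')) (hξβ : ξ < β) :
    M.mcol ξ α' ≤ M.mcol ξ α := by
  have hα := M.lt_of_mem X hαX
  obtain ⟨Z, hZ, hξZ, hαZ⟩ := M.exists_rank_eq_mcol ((hξβ.trans hβα).trans hα) hα
  rw [← hZ]
  rcases le_or_gt (M.wfRank X) (M.wfRank Z) with hXZ | hZX
  · have hβZ : β ∈ Z.1 := inter_Iio_subset_of_wfRank_le hXZ hαX hαZ ⟨hβX, hβα⟩
    obtain ⟨U, hZU, hX'U⟩ := M.exists_le_le Z X'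
    obtain ⟨V, -, -, hα'V, hV⟩ := exists_le_mem_mem_wfRank_eq (hX'U hα'X') (hX'U hα'X')
      hα'X' hα'X' (hr ▸ hXZ) (M.wfRank_mono hZU)
    have hβV : β ∈ V.1 :=
      inter_Iio_subset_of_wfRank_le ((hr ▸ hXZ).trans_eq hV.symm) hα'X' hα'V ⟨hβX', hβα'⟩
    have hξV : ξ ∈ V.1 := inter_Iio_subset_of_wfRank_le hV.ge hβZ hβV ⟨hξZ, hξβ⟩
    exact (M.mcol_le_rank hξV hα'V).trans_eq ((rank_eq_rank_iff hκ).2 hV)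
  · -- `Z` may be replaced by some `Z' ≤ X`, which the transfer `X → X'` moves onto `ξ, α'`
    have hξX : ξ ∈ X.1 := inter_Iio_subset_of_wfRank_le hZX.le hαZ hαX ⟨hξZ, hξβ.trans hβα⟩
    obtain ⟨Z', hZ'X, hξZ', hαZ', hZ'⟩ :=
      exists_le_mem_mem_wfRank_eq hξX hαX hξZ hαZ le_rfl hZX.le
    have hZ'X : Z' < X := hZ'X.lt_of_ne (by rintro rfl; exact hZX.ne' hZ')
    have hξX' : ξ ∈ X'.1 := inter_Iio_subset_of_wfRank_le hr.le hβX hβX' ⟨hξX, hξβ⟩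
    have hfixξ : omap X.1 X'.1 ξ = ξ :=
      omap_eq_self hξX' (inter_Iio_eq_of_wfRank_eq hr hξX hξX')
    have hmapα : omap X.1 X'.1 α = α' := omap_eq_of_otp_eq hα'X' hpos.symm
    calc M.mcol ξ α' ≤ M.rank (M.transfer hr ⟨Z', hZ'X⟩) :=
          M.mcol_le_rank ⟨ξ, hξZ', hfixξ⟩ ⟨α, hαZ', hmapα⟩
      _ = M.rank Z := (rank_eq_rank_iff hκ).2 ((M.wfRank_transfer hr _).trans hZ')

theorem mcol_eq_mcol_of_otp_seq_eq (hκ : κ.IsRegular) {β α α' : Ordinal} (hβα : β < α)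
    (hβα' : β < α') (hα : α < (Order.succ κ).ord) (hα' : α' < (Order.succ κ).ord)
    (hcol : M.mcol β α = M.mcol β α')
    (hseq : otp (M.seq α (M.mcol β α)) = otp (M.seq α' (M.mcol β α'))) {ξ : Ordinal}
    (hξ : ξ < β) : M.mcol ξ α = M.mcol ξ α' := by
  obtain ⟨X, hX, hβX, hαX⟩ := M.exists_rank_eq_mcol (hβα.trans hα) hα
  obtain ⟨X', hX', hβX', hα'X'⟩ := M.exists_rank_eq_mcol (hβα'.trans hα') hα'
  have hr : M.wfRank X = M.wfRank X' := (rank_eq_rank_iff hκ).1 (hX.trans (hcol.trans hX'.symm))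
  rw [← hX, ← hX', M.seq_eq_inter_Iio hκ hαX, M.seq_eq_inter_Iio hκ hα'X'] at hseq
  exact le_antisymm
    (M.mcol_le_mcol_of_otp_eq hκ hr.symm hβX' hβX hα'X' hαX hβα' hβα hseq.symm hξ)
    (M.mcol_le_mcol_of_otp_eq hκ hr hβX hβX' hαX hα'X' hβα hβα' hseq hξ)

def level (β : Ordinal) : Set (Ordinal → Ordinal) :=
  {t | ∃ α : Ordinal, β < α ∧ α < (Order.succ κ).ord ∧
    t = fun ξ => if ξ < β then M.mcol ξ α else 0}

theorem level_nonempty (hκ : ℵ₀ ≤ κ) {β : Ordinal} (hβ : β < (Order.succ κ).ord) :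
    (M.level β).Nonempty :=
  ⟨_, Order.succ β, Order.lt_succ β,
    (Cardinal.isSuccLimit_ord (hκ.trans (Order.le_succ κ))).succ_lt hβ, rfl⟩

theorem card_level_le (hκ : κ.IsRegular) (β : Ordinal) :
    #(M.level β) ≤ Cardinal.lift.{1} κ := by
  have hlevel : M.level β =
      (fun α ξ => if ξ < β then M.mcol ξ α else 0) '' Ioo β (Order.succ κ).ord := by
    ext t
    simp [level, and_assoc, eq_comm]
  let key : Ordinal → Ordinal × Ordinal := fun α => (M.mcol β α, otp (M.seq α (M.mcol β α)))
  have hkey : key '' Ioo β (Order.succ κ).ord ⊆ Iio κ.ord ×ˢ Iio κ.ord := by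
    rintro _ ⟨α, ⟨hβα, hα⟩, rfl⟩
    exact ⟨M.mcol_lt_ord hκ (hβα.trans hα) hα, (otp_lt_ord_iff
      (bddAbove_Iio.mono (M.seq_subset_Iio _ _))).2 (M.card_seq_lt hκ _ _)⟩
  rw [hlevel]
  calc _ ≤ #(key '' Ioo β (Order.succ κ).ord) := by
        refine Cardinal.mk_image_le_mk_image_of_factors key fun α hα α' hα' h => funext fun ξ => ?_
        split_ifs with hξ
        · exact M.mcol_eq_mcol_of_otp_seq_eq hκ hα.1 hα'.1 hα.2 hα'.2 (congrArg Prod.fst h)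
            (congrArg Prod.snd h) hξ
        · rfl
    _ ≤ #↥(Iio κ.ord ×ˢ Iio κ.ord) := mk_le_mk_of_subset hkey
    _ = Cardinal.lift.{1} κ := by
        rw [Cardinal.mk_congr (Equiv.Set.prod _ _), Cardinal.mk_prod, Cardinal.mk_Iio_ordinal,
          Cardinal.card_ord, Cardinal.lift_id]
        exact Cardinal.mul_eq_self (by simpa using hκ.aleph0_le)

theorem not_exists_branch (hκ : κ.IsRegular) :
    ¬∃ b : Ordinal → Ordinal, ∀ β < (Order.succ κ).ord,
      (fun ξ => if ξ < β then b ξ else 0) ∈ M.level β := by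
  rintro ⟨b, hb⟩
  have hcol : ∀ β < (Order.succ κ).ord,
      ∃ α, β < α ∧ α < (Order.succ κ).ord ∧ ∀ ξ < β, b ξ = M.mcol ξ α := by
    intro β hβ
    obtain ⟨α, hβα, hα, heq⟩ := hb β hβ
    exact ⟨α, hβα, hα, fun ξ hξ => by simpa [hξ] using congrFun heq ξ⟩
  choose! top hβtop htop hbtop using hcol
  have hlim := Cardinal.isSuccLimit_ord (hκ.aleph0_le.trans (Order.le_succ κ))
  have hbκ : ∀ ξ < (Order.succ κ).ord, b ξ < κ.ord := fun ξ hξ => by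
    rw [hbtop _ (hlim.succ_lt hξ) ξ (Order.lt_succ ξ)]
    exact M.mcol_lt_ord hκ hξ (htop _ (hlim.succ_lt hξ))
  obtain ⟨ρ, hρ⟩ := exists_lift_lt_card_fiber hκ.aleph0_le b hbκ
  obtain ⟨β, hβ, hβρ⟩ := exists_lift_le_card_inter_Iio hκ.aleph0_le (fun ξ hξ => hξ.1) hρ.le
  have hsub : {ξ | ξ < (Order.succ κ).ord ∧ b ξ = ρ} ∩ Iio β ⊆ M.seq (top β) ρ :=
    fun ξ ⟨⟨_, hξρ⟩, hξβ⟩ => M.setOf_mcol_eq_subset_seq (htop β hβ) ρ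
      ⟨hξβ.trans (hβtop β hβ), hbtop β hβ ξ hξβ ▸ hξρ⟩
  exact (hβρ.trans (mk_le_mk_of_subset hsub)).not_gt (M.card_seq_lt hκ _ _)

end TwoCardinal

/-- The tree of restrictions `{m(·,α)↾β : β < α < κ⁺}` of the μ-coloring is a
`κ⁺`-Aronszajn tree: all `κ⁺` levels are nonempty, of size at most `κ`, and there is no
branch of length `κ⁺`. -/
theorem aronszajn_tree (κ : Cardinal) (hκ : κ.IsRegular) (M : TwoCardinal κ)
    (T : Ordinal → Set (Ordinal → Ordinal))
    (hT : ∀ β, T β = {t | ∃ α : Ordinal, β < α ∧ α < (Order.succ κ).ord ∧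
      t = fun ξ => if ξ < β then M.mcol ξ α else 0}) :
    (∀ β : Ordinal, β < (Order.succ κ).ord → (T β).Nonempty) ∧
    (∀ β : Ordinal, β < (Order.succ κ).ord → #(T β) ≤ Cardinal.lift.{1} κ) ∧
    ¬ ∃ b : Ordinal → Ordinal, ∀ β : Ordinal, β < (Order.succ κ).ord →
      (fun ξ => if ξ < β then b ξ else 0) ∈ T β := by
  obtain rfl : T = M.level := funext hT
  exact ⟨fun _ hβ => M.level_nonempty hκ.aleph0_le hβ, fun β _ => M.card_level_le hκ β,
    M.not_exists_branch hκ⟩
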